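/- Let K be a nonempty compact Hausdorff space with no isolated points (a perfect compact Hausdorff space) and let X = C(K, ℝ) be the Banach space of continuous real-valued functions on K with the supremum norm. Then no point of the unit sphere S_{X*} is a point of continuity of the identity map I : (B_{X*}, w*) → (B_{X*}, w). -/

import Mathlib

/-!
Let `μ` be the signed Radon measure representing `f`, so `‖μ‖ = 1`. It suffices to find a net
`gᵢ` in the dual ball with `gᵢ → f` weak-* and a weak-* cluster point `Φ ∈ X**` of a bounded net
`wⱼ` in `X` with `|Φ f| ≥ c > 0` but `Φ gᵢ = 0` for all `i`: then `gᵢ` does not tend to `f`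
weakly.

If `μ` has an atom at `x`, take `wⱼ` of norm `≤ 1` supported in shrinking neighbourhoods of `x`
with `|f wⱼ| ≥ ε`. As `x` is not isolated, moving the mass of `μ` near `x` to nearby points
`y ≠ x` gives functionals converging weak-* to `f`, each of which annihilates all functions
supported in some neighbourhood of `x` avoiding `y`.

If `μ` is atomless, finitely supported measures (built from fine partitions of unity) approximate
`μ` weak-*, while functions vanishing on any given finite set still almost norm `f`.
-/

open NormedSpace Filter Topology

noncomputable section

/-- `f` is a point of continuity of the identity map
`I : (B_{E*}, w*) → (B_{E*}, w)` between the closed unit ball of the dual of `E`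
with the relative weak-* topology and the same set with the relative weak topology. -/
def IsPoC {E : Type*} [NormedAddCommGroup E] [NormedSpace ℝ E] (f : StrongDual ℝ E) : Prop :=
  ContinuousWithinAt
    (fun g : WeakDual ℝ E => toWeakSpace ℝ (StrongDual ℝ E) (WeakDual.toStrongDual g))
    {g : WeakDual ℝ E | ‖WeakDual.toStrongDual g‖ ≤ 1}
    (StrongDual.toWeakDual f)

section Criterion

variable {E : Type*} [NormedAddCommGroup E] [NormedSpace ℝ E]

theorem exists_ultrafilter_tendsto_bidual {κ : Type*} (M : Filter κ) [M.NeBot] (w : κ → E)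
    {R : ℝ} (hw : ∀ᶠ j in M, ‖w j‖ ≤ R) :
    ∃ (U : Ultrafilter κ) (Φ : StrongDual ℝ (StrongDual ℝ E)),
      ↑U ≤ M ∧ ∀ ν, Tendsto (fun j => ν (w j)) U (𝓝 (Φ ν)) := by
  let W : κ → WeakDual ℝ (StrongDual ℝ E) :=
    fun j => StrongDual.toWeakDual (inclusionInDoubleDual ℝ E (w j))
  let U := Ultrafilter.of M
  have hW : ∀ᶠ j in U, ‖WeakDual.toStrongDual (W j)‖ ≤ R :=
    (hw.filter_mono (Ultrafilter.of_le M)).mono fun j hj => (double_dual_bound ℝ E (w j)).trans hj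
  obtain ⟨Φ, -, hΦ⟩ :=
    (WeakDual.isCompact_closedBall (0 : StrongDual ℝ (StrongDual ℝ E)) R).ultrafilter_le_nhds
      (U.map W) (le_principal_iff.mpr (hW.mono fun j hj => by simpa using hj))
  exact ⟨U, Φ.toStrongDual, Ultrafilter.of_le M,
    fun ν => ((WeakDual.eval_continuous ν).tendsto Φ).comp hΦ⟩

theorem not_isPoC_of_separating {f : StrongDual ℝ E} {κ : Type*} (M : Filter κ) [M.NeBot]
    (w : κ → E) {R : ℝ} (hw : ∀ᶠ j in M, ‖w j‖ ≤ R) {c : ℝ} (hc : 0 < c)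
    (hfw : ∀ᶠ j in M, c ≤ |f (w j)|)
    (happrox : ∀ (H : Finset E) (δ : ℝ), 0 < δ → ∃ g : StrongDual ℝ E, ‖g‖ ≤ 1 ∧
      (∀ x ∈ H, |g x - f x| ≤ δ) ∧ ∀ᶠ j in M, g (w j) = 0) :
    ¬ IsPoC f := by
  classical
  obtain ⟨U, Φ, hUM, hΦ⟩ := exists_ultrafilter_tendsto_bidual M w hw
  have hΦf : c ≤ |Φ f| := ge_of_tendsto (hΦ f).abs (hfw.filter_mono hUM)
  have hΦg : ∀ g : StrongDual ℝ E, (∀ᶠ j in M, g (w j) = 0) → Φ g = 0 := fun g hg =>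
    tendsto_nhds_unique (hΦ g) (tendsto_const_nhds.congr' ((hg.filter_mono hUM).mono
      fun j h => h.symm))
  choose g hg1 hgf hgw using fun q : Finset E × ℕ => happrox q.1 (1 / (q.2 + 1)) (by positivity)
  have hδ : Tendsto (fun q : Finset E × ℕ => (1 : ℝ) / (q.2 + 1)) atTop (𝓝 0) :=
    tendsto_one_div_add_atTop_nhds_zero_nat.comp
      (prod_atTop_atTop_eq (α := Finset E) (β := ℕ) ▸ tendsto_snd)
  have hconv : Tendsto (fun q => StrongDual.toWeakDual (g q)) atTop
      (𝓝[{g : WeakDual ℝ E | ‖WeakDual.toStrongDual g‖ ≤ 1}] (StrongDual.toWeakDual f)) := by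
    refine tendsto_nhdsWithin_iff.mpr ⟨?_, Eventually.of_forall hg1⟩
    refine tendsto_iff_forall_eval_tendsto_topDualPairing.mpr fun x => ?_
    refine tendsto_iff_norm_sub_tendsto_zero.mpr (squeeze_zero' (Eventually.of_forall
      fun _ => norm_nonneg _) ?_ hδ)
    filter_upwards [eventually_ge_atTop ({x}, 0)] with q hq
    exact hgf q x (hq.1 (Finset.mem_singleton_self x))
  intro hPoC
  have hlim : Tendsto (fun q => Φ (g q)) atTop (𝓝 (Φ f)) :=
    ((WeakBilin.eval_continuous _ Φ).tendsto _).comp (hPoC.tendsto.comp hconv)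
  have hΦf0 : Φ f = 0 :=
    tendsto_nhds_unique hlim (tendsto_const_nhds.congr fun q => (hΦg _ (hgw q)).symm)
  rw [hΦf0, abs_zero] at hΦf
  exact hc.not_ge hΦf

theorem not_isPoC_of_operators {f : StrongDual ℝ E} (hf : ‖f‖ ≤ 1) {κ : Type*} (M : Filter κ)
    [M.NeBot] (w : κ → E) {R : ℝ} (hw : ∀ᶠ j in M, ‖w j‖ ≤ R) {c : ℝ} (hc : 0 < c)
    (hfw : ∀ᶠ j in M, c ≤ |f (w j)|)
    (happrox : ∀ (H : Finset E) (δ : ℝ), 0 < δ → ∃ P : E →L[ℝ] E, ‖P‖ ≤ 1 ∧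
      (∀ x ∈ H, ‖P x - x‖ ≤ δ) ∧ ∀ᶠ j in M, P (w j) = 0) :
    ¬ IsPoC f := by
  refine not_isPoC_of_separating M w hw hc hfw fun H δ hδ => ?_
  obtain ⟨P, hP, hPH, hPw⟩ := happrox H δ hδ
  refine ⟨f.comp P, ?_, fun x hx => ?_, hPw.mono fun j hj => by simp [hj]⟩
  · calc ‖f.comp P‖ ≤ ‖f‖ * ‖P‖ := f.opNorm_comp_le P
      _ ≤ 1 := mul_le_one₀ hf (norm_nonneg P) hP
  · calc |f (P x) - f x| = ‖f (P x - x)‖ := by rw [map_sub, Real.norm_eq_abs]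
      _ ≤ ‖f‖ * ‖P x - x‖ := f.le_opNorm _
      _ ≤ 1 * δ := by gcongr; exact hPH x hx
      _ = δ := one_mul δ

end Criterion

theorem exists_bump_eventually_eq_one {X : Type*} [TopologicalSpace X] [RegularSpace X]
    [LocallyCompactSpace X] {x : X} {U : Set X} (hU : U ∈ 𝓝 x) :
    ∃ e : C(X, ℝ), (∀ z, e z ∈ Set.Icc (0 : ℝ) 1) ∧ (∀ z ∉ U, e z = 0) ∧ ∀ᶠ z in 𝓝 x, e z = 1 := by
  obtain ⟨C, hC, hxC, hCU⟩ :=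
    exists_compact_subset isOpen_interior (mem_interior_iff_mem_nhds.mpr hU)
  obtain ⟨e, he1, he0, -, heI⟩ := exists_continuous_one_zero_of_isCompact hC
    isOpen_interior.isClosed_compl (Set.disjoint_compl_right_iff_subset.mpr hCU)
  exact ⟨e, heI, fun z hz => he0 fun hzU => hz (interior_subset hzU),
    Filter.mem_of_superset (mem_interior_iff_mem_nhds.mp hxC) fun z hz => he1 hz⟩

theorem eventually_forall_finset_dist_le {X Y : Type*} [TopologicalSpace X] [PseudoMetricSpace Y]
    (H : Finset C(X, Y)) (x : X) {δ : ℝ} (hδ : 0 < δ) :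
    ∀ᶠ z in 𝓝 x, ∀ h ∈ H, dist (h z) (h x) ≤ δ :=
  (eventually_all_finset H).mpr fun h _ =>
    (h.continuous.tendsto x).eventually (Metric.closedBall_mem_nhds (h x) hδ)

section Operators

variable {K : Type*} [TopologicalSpace K] [CompactSpace K]

/-- The adjoint of `blendAt e y` moves the part `e • μ` of a measure `μ` to the point `y`. -/
def blendAt (e : C(K, ℝ)) (y : K) : C(K, ℝ) →L[ℝ] C(K, ℝ) :=
  ContinuousLinearMap.mul ℝ C(K, ℝ) (1 - e) + (ContinuousMap.evalCLM ℝ y).smulRight e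

theorem blendAt_apply (e : C(K, ℝ)) (y : K) (h : C(K, ℝ)) (z : K) :
    blendAt e y h z = (1 - e z) * h z + e z * h y := by
  simp [blendAt, mul_one_sub, mul_comm]

variable {e : C(K, ℝ)} {y : K}

theorem norm_blendAt_le (he : ∀ z, e z ∈ Set.Icc (0 : ℝ) 1) : ‖blendAt e y‖ ≤ 1 := by
  refine ContinuousLinearMap.opNorm_le_bound _ zero_le_one fun h => ?_
  rw [one_mul, ContinuousMap.norm_le _ (norm_nonneg h)]
  intro z
  have hz := abs_le.mp (h.norm_coe_le_norm z)
  have hy := abs_le.mp (h.norm_coe_le_norm y)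
  obtain ⟨he0, he1⟩ := he z
  rw [blendAt_apply, Real.norm_eq_abs, abs_le]
  constructor <;> nlinarith

theorem norm_blendAt_sub_le (he : ∀ z, e z ∈ Set.Icc (0 : ℝ) 1) {h : C(K, ℝ)} {δ : ℝ}
    (hδ : 0 ≤ δ) (hh : ∀ z, e z ≠ 0 → |h y - h z| ≤ δ) : ‖blendAt e y h - h‖ ≤ δ := by
  rw [ContinuousMap.norm_le _ hδ]
  intro z
  have hdiff : (blendAt e y h - h) z = e z * (h y - h z) := by
    rw [ContinuousMap.sub_apply, blendAt_apply]; ring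
  rw [hdiff, Real.norm_eq_abs, abs_mul, abs_of_nonneg (he z).1]
  rcases eq_or_ne (e z) 0 with hz | hz
  · rw [hz, zero_mul]; exact hδ
  · exact (mul_le_of_le_one_left (abs_nonneg _) (he z).2).trans (hh z hz)

theorem blendAt_eq_zero {v : C(K, ℝ)} (hy : v y = 0) (hv : ∀ z, e z ≠ 1 → v z = 0) :
    blendAt e y v = 0 := by
  ext z
  rw [blendAt_apply, hy, mul_zero, add_zero, ContinuousMap.zero_apply]
  rcases eq_or_ne (e z) 1 with hz | hz
  · rw [hz, sub_self, zero_mul]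
  · rw [hv z hz, mul_zero]

end Operators

namespace PartitionOfUnity

variable {K : Type*} [TopologicalSpace K] {ι : Type*} [Fintype ι]

theorem abs_sum_mul_le (ρ : PartitionOfUnity ι K Set.univ) (x : K) {c : ι → ℝ} {M : ℝ}
    (hc : ∀ i, ρ i x ≠ 0 → |c i| ≤ M) : |∑ i, ρ i x * c i| ≤ M := by
  have h := (convex_Icc (-M) M).finsum_mem (ρ.nonneg · x) (ρ.sum_eq_one (Set.mem_univ x))
    fun i hi => abs_le.mp (hc i hi)
  rw [finsum_eq_sum_of_fintype] at h
  exact abs_le.mpr h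

variable [CompactSpace K]

/-- The adjoint of `ρ.interpolate t` replaces a measure `μ` by `∑ i, μ (ρ i) • δ (t i)`. -/
def interpolate (ρ : PartitionOfUnity ι K Set.univ) (t : ι → K) : C(K, ℝ) →L[ℝ] C(K, ℝ) :=
  ∑ i, (ContinuousMap.evalCLM ℝ (t i)).smulRight (ρ i)

variable (ρ : PartitionOfUnity ι K Set.univ) (t : ι → K)

theorem interpolate_apply (h : C(K, ℝ)) (z : K) :
    ρ.interpolate t h z = ∑ i, ρ i z * h (t i) := by
  simp [interpolate, ContinuousMap.sum_apply, mul_comm]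

theorem norm_interpolate_le : ‖ρ.interpolate t‖ ≤ 1 := by
  refine ContinuousLinearMap.opNorm_le_bound _ zero_le_one fun h => ?_
  rw [one_mul, ContinuousMap.norm_le _ (norm_nonneg h)]
  intro z
  rw [interpolate_apply]
  exact ρ.abs_sum_mul_le z fun i _ => h.norm_coe_le_norm _

theorem norm_interpolate_sub_le {h : C(K, ℝ)} {δ : ℝ} (hδ : 0 ≤ δ)
    (hh : ∀ i z, ρ i z ≠ 0 → |h (t i) - h z| ≤ δ) : ‖ρ.interpolate t h - h‖ ≤ δ := by
  rw [ContinuousMap.norm_le _ hδ]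
  intro z
  have hdiff : (ρ.interpolate t h - h) z = ∑ i, ρ i z * (h (t i) - h z) := by
    have hsum : ∑ i, ρ i z = 1 := by
      simpa [finsum_eq_sum_of_fintype] using ρ.sum_eq_one (Set.mem_univ z)
    simp only [ContinuousMap.sub_apply, interpolate_apply, mul_sub, Finset.sum_sub_distrib,
      ← Finset.sum_mul, hsum, one_mul]
  rw [hdiff, Real.norm_eq_abs]
  exact ρ.abs_sum_mul_le z (hh · z)

theorem interpolate_eq_zero {v : C(K, ℝ)} (hv : ∀ i, v (t i) = 0) : ρ.interpolate t v = 0 := by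
  ext z
  simp [interpolate_apply, hv]

end PartitionOfUnity

theorem exists_finset_partitionOfUnity_subordinate {K : Type*} [TopologicalSpace K]
    [CompactSpace K] [T2Space K] (U : K → Set K) (hU : ∀ x, U x ∈ 𝓝 x) :
    ∃ (T : Finset K) (ρ : PartitionOfUnity T K Set.univ), ∀ i z, ρ i z ≠ 0 → z ∈ U i := by
  obtain ⟨T, hT⟩ := CompactSpace.elim_nhds_subcover (fun x => interior (U x))
    fun x => interior_mem_nhds.mpr (hU x)
  have hcover : Set.univ ⊆ ⋃ i : T, interior (U i) := fun z _ => by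
    obtain ⟨x, hx, hz⟩ := Set.mem_iUnion₂.mp (hT ▸ Set.mem_univ z : z ∈ ⋃ x ∈ T, interior (U x))
    exact Set.mem_iUnion.mpr ⟨⟨x, hx⟩, hz⟩
  obtain ⟨ρ, hρ⟩ := PartitionOfUnity.exists_isSubordinate isClosed_univ _
    (fun _ => isOpen_interior) hcover
  exact ⟨T, ρ, fun i z hz => interior_subset (hρ i (subset_tsupport _ hz))⟩

section AtomFree

variable {K : Type*} [TopologicalSpace K] [CompactSpace K] [T2Space K]

/-- For the Riesz measure `μ` of `f` this says `|μ| {x} = 0`. -/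
def HasNoAtomAt (f : StrongDual ℝ C(K, ℝ)) (x : K) : Prop :=
  ∀ ε > 0, ∃ U ∈ 𝓝 x, ∀ v : C(K, ℝ), ‖v‖ ≤ 1 → (∀ z ∉ U, v z = 0) → |f v| < ε

variable {f : StrongDual ℝ C(K, ℝ)}

theorem HasNoAtomAt.exists_eq_zero_at {x : K} (hx : HasNoAtomAt f x) {w : C(K, ℝ)}
    (hw : ‖w‖ ≤ 1) {ε : ℝ} (hε : 0 < ε) :
    ∃ w' : C(K, ℝ), ‖w'‖ ≤ 1 ∧ w' x = 0 ∧ (∀ z, w z = 0 → w' z = 0) ∧ |f w' - f w| < ε := by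
  obtain ⟨U, hU, hsmall⟩ := hx ε hε
  obtain ⟨e, heI, he0, he1⟩ := exists_bump_eventually_eq_one hU
  have hnorm : ∀ z, ‖w z‖ ≤ 1 := fun z => (w.norm_coe_le_norm z).trans hw
  refine ⟨w * (1 - e), ?_, by simp [he1.self_of_nhds], fun z hz => by simp [hz], ?_⟩
  · refine (ContinuousMap.norm_le _ zero_le_one).mpr fun z => ?_
    rw [ContinuousMap.mul_apply, norm_mul]
    refine mul_le_one₀ (hnorm z) (norm_nonneg _) ?_
    simp only [ContinuousMap.sub_apply, ContinuousMap.one_apply, Real.norm_eq_abs]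
    exact abs_le.mpr ⟨by linarith [(heI z).2], by linarith [(heI z).1]⟩
  · have hwe : f (w * (1 - e)) - f w = -f (w * e) := by
      rw [← map_sub, ← map_neg]; congr 1; ring
    rw [hwe, abs_neg]
    refine hsmall _ ((ContinuousMap.norm_le _ zero_le_one).mpr fun z => ?_)
      fun z hz => by simp [he0 z hz]
    rw [ContinuousMap.mul_apply, norm_mul]
    exact mul_le_one₀ (hnorm z) (norm_nonneg _) (by simpa [abs_of_nonneg (heI z).1] using (heI z).2)

theorem exists_eq_zero_on_finset_of_hasNoAtomAt (F : Finset K) (hF : ∀ x ∈ F, HasNoAtomAt f x)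
    {w : C(K, ℝ)} (hw : ‖w‖ ≤ 1) {ε : ℝ} (hε : 0 < ε) :
    ∃ w' : C(K, ℝ), ‖w'‖ ≤ 1 ∧ (∀ z ∈ F, w' z = 0) ∧ |f w' - f w| < ε := by
  classical
  induction F using Finset.induction_on generalizing ε with
  | empty => exact ⟨w, hw, by simp, by simpa using hε⟩
  | insert a F _ ih =>
    obtain ⟨w₁, hw₁, hw₁F, hfw₁⟩ :=
      ih (fun x hx => hF x (Finset.mem_insert_of_mem hx)) (half_pos hε)
    obtain ⟨w', hw', hw'a, hw'₁, hfw'⟩ :=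
      (hF a (Finset.mem_insert_self a F)).exists_eq_zero_at hw₁ (half_pos hε)
    refine ⟨w', hw', ?_, ?_⟩
    · simp only [Finset.mem_insert, forall_eq_or_imp]
      exact ⟨hw'a, fun z hz => hw'₁ z (hw₁F z hz)⟩
    · calc |f w' - f w| ≤ |f w' - f w₁| + |f w₁ - f w| := abs_sub_le _ _ _
        _ < ε / 2 + ε / 2 := add_lt_add hfw' hfw₁
        _ = ε := add_halves ε

theorem not_isPoC_of_forall_hasNoAtomAt (hf : ‖f‖ = 1) (h : ∀ x, HasNoAtomAt f x) :
    ¬ IsPoC f := by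
  classical
  obtain ⟨w₀, hw₀, hfw₀⟩ :=
    f.exists_lt_apply_of_lt_opNorm (show (3 / 4 : ℝ) < ‖f‖ by rw [hf]; norm_num)
  have hw : ∀ F : Finset K, ∃ w : C(K, ℝ), ‖w‖ ≤ 1 ∧ (∀ z ∈ F, w z = 0) ∧ 1 / 2 ≤ |f w| := by
    intro F
    obtain ⟨w, hw, hwF, hfw⟩ := exists_eq_zero_on_finset_of_hasNoAtomAt F (fun x _ => h x)
      hw₀.le (show (0 : ℝ) < 1 / 4 by norm_num)
    refine ⟨w, hw, hwF, ?_⟩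
    rw [Real.norm_eq_abs] at hfw₀
    linarith [abs_sub_abs_le_abs_sub (f w₀) (f w), abs_sub_comm (f w) (f w₀)]
  choose w hw1 hwF hfw using hw
  refine not_isPoC_of_operators hf.le atTop w (Eventually.of_forall hw1)
    (by norm_num : (0 : ℝ) < 1 / 2) (Eventually.of_forall hfw) fun H δ hδ => ?_
  obtain ⟨T, ρ, hρ⟩ := exists_finset_partitionOfUnity_subordinate
    (fun z => {x | ∀ h ∈ H, dist (h x) (h z) ≤ δ})
    fun z => eventually_forall_finset_dist_le H z hδ
  refine ⟨ρ.interpolate (↑), ρ.norm_interpolate_le _,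
    fun h hh => ρ.norm_interpolate_sub_le _ hδ.le fun i z hz => ?_, ?_⟩
  · rw [abs_sub_comm]
    exact hρ i z hz h hh
  · filter_upwards [eventually_ge_atTop T] with F hF
    exact ρ.interpolate_eq_zero _ fun i => hwF F i (hF i.2)

theorem not_isPoC_of_not_hasNoAtomAt (hf : ‖f‖ ≤ 1) {x : K} (hx : (𝓝[≠] x).NeBot)
    (hfx : ¬ HasNoAtomAt f x) : ¬ IsPoC f := by
  obtain ⟨ε, hε, hv⟩ : ∃ ε > 0, ∀ U ∈ 𝓝 x,
      ∃ v : C(K, ℝ), ‖v‖ ≤ 1 ∧ (∀ z ∉ U, v z = 0) ∧ ε ≤ |f v| := by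
    simpa [HasNoAtomAt] using hfx
  choose! v hv1 hv0 hfv using hv
  -- neighbourhoods of `x`, directed by reverse inclusion
  set M : Filter (Set K) := (𝓝 x).smallSets ⊓ 𝓟 (𝓝 x).sets
  have hMnhds : ∀ᶠ W in M, W ∈ 𝓝 x := mem_inf_of_right (mem_principal_self _)
  have hMsub : ∀ {V}, V ∈ 𝓝 x → ∀ᶠ W in M, W ⊆ V := fun hV =>
    mem_inf_of_left (eventually_smallSets_subset.mpr hV)
  have : M.NeBot := (hasBasis_smallSets _).inf_principal_neBot_iff.mpr
    fun _ hV => ⟨_, Set.mem_powerset subset_rfl, hV⟩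
  refine not_isPoC_of_operators hf M v (hMnhds.mono hv1) hε (hMnhds.mono hfv) fun H δ hδ => ?_
  have hU := eventually_forall_finset_dist_le H x (half_pos hδ)
  obtain ⟨y, hyU, hyx⟩ : ∃ y, (∀ h ∈ H, dist (h y) (h x) ≤ δ / 2) ∧ y ≠ x :=
    hx.nonempty_of_mem ((eventually_nhdsWithin_of_eventually_nhds hU).and self_mem_nhdsWithin)
  obtain ⟨e, heI, he0, he1⟩ := exists_bump_eventually_eq_one hU
  refine ⟨blendAt e y, norm_blendAt_le heI,
    fun h hh => norm_blendAt_sub_le heI hδ.le fun z hz => ?_, ?_⟩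
  · have hzU := not_imp_comm.mp (he0 z) hz
    calc |h y - h z| ≤ dist (h y) (h x) + dist (h z) (h x) :=
        (Real.dist_eq _ _).symm.trans_le (dist_triangle_right _ _ _)
      _ ≤ δ / 2 + δ / 2 := add_le_add (hyU h hh) (hzU h hh)
      _ = δ := add_halves δ
  · filter_upwards [hMsub (he1.and (isOpen_compl_singleton.mem_nhds hyx.symm)), hMnhds]
      with W hW hWx
    exact blendAt_eq_zero (hv0 W hWx y fun hy => (hW hy).2 rfl)
      fun z hz => hv0 W hWx z fun hzW => hz (hW hzW).1

end AtomFree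

theorem stmt_13_general {K : Type*} [TopologicalSpace K] [CompactSpace K] [T2Space K]
    (hK : ∀ x : K, (𝓝[≠] x).NeBot) :
    ∀ f : StrongDual ℝ C(K, ℝ), ‖f‖ = 1 → ¬ IsPoC f := by
  intro f hf
  by_cases h : ∀ x, HasNoAtomAt f x
  · exact not_isPoC_of_forall_hasNoAtomAt hf h
  · obtain ⟨x, hx⟩ := not_forall.mp h
    exact not_isPoC_of_not_hasNoAtomAt hf.le (hK x) hx

/-- Let `K` be a nonempty perfect compact Hausdorff space (no isolated
points) and `X = C(K, ℝ)`.  Then no point of the unit sphere `S_{X*}` is a point of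
continuity of `I : (B_{X*}, w*) → (B_{X*}, w)`. -/
theorem stmt_13 {K : Type*} [TopologicalSpace K] [CompactSpace K] [T2Space K] [Nonempty K]
    (hK : ∀ x : K, (𝓝[≠] x).NeBot) :
    ∀ f : StrongDual ℝ C(K, ℝ), ‖f‖ = 1 → ¬ IsPoC f :=
  stmt_13_general hK
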